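/- arXiv:1608.06075 — 3 statements merged into one kernel-verified Lean document; each statement's English description precedes it below -/
import Mathlib

section
/- Let {A_i}_{i=1}^n and {B_j}_{j=1}^m be Hermitian observables and ρ a density matrix with all ΔA_i ≠ 0 and ΔB_j ≠ 0. Define X_i = (A_i − ⟨A_i⟩I)√ρ / ΔA_i, Y_j = (B_j − ⟨B_j⟩I)√ρ / ΔB_j, and the n×m matrix G with G_{ij} = |Tr(X_i† Y_j)|. If some ⟨Ã_iB̃_j⟩ ≠ 0, then [∑_i (ΔA_i)²]^{1/2} [∑_j (ΔB_j)²]^{1/2} ≥ (1/σ_max(G)) ∑_{i,j} ( |⟨[A_i,B_j]⟩/(2i)|² + |(1/2)⟨{A_i,B_j}⟩ − ⟨A_i⟩⟨B_j⟩|² )^{1/2}. -/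
open Matrix BigOperators
open scoped ComplexOrder

noncomputable def qMean {d : ℕ} (ρ A : Matrix (Fin d) (Fin d) ℂ) : ℂ := (ρ * A).trace

noncomputable def qVar {d : ℕ} (ρ A : Matrix (Fin d) (Fin d) ℂ) : ℝ :=
  ((ρ * (A * A)).trace - (ρ * A).trace ^ 2).re

noncomputable def qDev {d : ℕ} (ρ A : Matrix (Fin d) (Fin d) ℂ) : ℝ :=
  Real.sqrt (qVar ρ A)

noncomputable def lambdaMax {n : ℕ} (M : Matrix (Fin n) (Fin n) ℂ) : ℝ :=
  sSup {r : ℝ | Module.End.HasEigenvalue (Matrix.toLin' M) (r : ℂ)}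

noncomputable def lambdaMaxR {n : ℕ} (M : Matrix (Fin n) (Fin n) ℝ) : ℝ :=
  sSup {r : ℝ | Module.End.HasEigenvalue (Matrix.toLin' M) r}

noncomputable def sigmaMax {n m : ℕ} (G : Matrix (Fin n) (Fin m) ℝ) : ℝ :=
  Real.sqrt (lambdaMaxR (Gᵀ * G))

/-! ### Auxiliary lemmas: linear algebra -/

theorem aux_rayleigh_bound {k : ℕ} (M : Matrix (Fin k) (Fin k) ℝ) (hM : M.IsHermitian) (μ : ℝ)
    (hμ : ∀ i, hM.eigenvalues i ≤ μ) (x : Fin k → ℝ) :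
    x ⬝ᵥ M *ᵥ x ≤ μ * (x ⬝ᵥ x) := by
  have hspec := hM.spectral_theorem
  have hunit : (hM.eigenvectorUnitary : Matrix (Fin k) (Fin k) ℝ) *
      star (hM.eigenvectorUnitary : Matrix (Fin k) (Fin k) ℝ) = 1 :=
    (Matrix.mem_unitaryGroup_iff).mp hM.eigenvectorUnitary.2
  set U : Matrix (Fin k) (Fin k) ℝ := (hM.eigenvectorUnitary : Matrix (Fin k) (Fin k) ℝ) with hU
  set y : Fin k → ℝ := (star U) *ᵥ x with hy
  have hstar : star U = Uᵀ := by
    rw [star_eq_conjTranspose, conjTranspose_eq_transpose_of_trivial]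
  have hvm : x ᵥ* U = y := by rw [hy, hstar, mulVec_transpose]
  have hUy : U *ᵥ y = x := by rw [hy, mulVec_mulVec, hunit, one_mulVec]
  have hyy : y ⬝ᵥ y = x ⬝ᵥ x := by
    calc y ⬝ᵥ y = y ⬝ᵥ (star U *ᵥ x) := by rw [← hy]
    _ = (y ᵥ* star U) ⬝ᵥ x := dotProduct_mulVec _ _ _
    _ = (U *ᵥ y) ⬝ᵥ x := by rw [hstar, vecMul_transpose]
    _ = x ⬝ᵥ x := by rw [hUy]
  have hMx : M *ᵥ x = U *ᵥ (diagonal (RCLike.ofReal ∘ hM.eigenvalues) *ᵥ y) := by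
    rw [hy, mulVec_mulVec, mulVec_mulVec]; conv_lhs => rw [hspec]
    rfl
  have hxMx : x ⬝ᵥ M *ᵥ x = ∑ i, hM.eigenvalues i * (y i)^2 := by
    rw [hMx, dotProduct_mulVec, hvm]
    simp only [dotProduct, mulVec_diagonal, Function.comp_apply, RCLike.ofReal_real_eq_id,
      id_eq]
    exact Finset.sum_congr rfl fun i _ => by ring
  rw [hxMx, ← hyy]
  have h2 : μ * (y ⬝ᵥ y) = ∑ i, μ * (y i)^2 := by
    simp only [dotProduct, Finset.mul_sum]
    exact Finset.sum_congr rfl fun i _ => by ring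
  rw [h2]
  exact Finset.sum_le_sum fun i _ => mul_le_mul_of_nonneg_right (hμ i) (sq_nonneg _)

theorem aux_hasEig_iff {k : ℕ} (M : Matrix (Fin k) (Fin k) ℝ) (r : ℝ) :
    Module.End.HasEigenvalue (Matrix.toLin' M) r ↔ ∃ v, v ≠ 0 ∧ M *ᵥ v = r • v := by
  rw [Module.End.hasEigenvalue_iff, Submodule.ne_bot_iff]
  constructor
  · rintro ⟨v, hv, hv0⟩
    exact ⟨v, hv0, by simpa [Matrix.toLin'_apply] using (Module.End.mem_eigenspace_iff.mp hv)⟩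
  · rintro ⟨v, hv0, hv⟩
    exact ⟨v, Module.End.mem_eigenspace_iff.mpr (by simpa [Matrix.toLin'_apply] using hv), hv0⟩

theorem aux_dotProduct_self_pos {k : ℕ} {v : Fin k → ℝ} (hv : v ≠ 0) : 0 < v ⬝ᵥ v := by
  refine lt_of_le_of_ne (Finset.sum_nonneg fun i _ => mul_self_nonneg (v i)) ?_
  exact fun h => hv (dotProduct_self_eq_zero.mp h.symm)

theorem aux_lambdaMaxR_isGreatest {k : ℕ} [Nonempty (Fin k)] (M : Matrix (Fin k) (Fin k) ℝ)
    (hM : M.IsHermitian) :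
    IsGreatest {r : ℝ | Module.End.HasEigenvalue (Matrix.toLin' M) r}
      (Finset.univ.sup' (Finset.univ_nonempty (α := Fin k)) hM.eigenvalues) := by
  set μ := Finset.univ.sup' Finset.univ_nonempty hM.eigenvalues with hμdef
  have hμub : ∀ i, hM.eigenvalues i ≤ μ := fun i => Finset.le_sup' _ (Finset.mem_univ i)
  constructor
  · obtain ⟨j, _, hj⟩ := Finset.exists_mem_eq_sup' Finset.univ_nonempty hM.eigenvalues
    rw [Set.mem_setOf_eq, aux_hasEig_iff]
    refine ⟨⇑(hM.eigenvectorBasis j), ?_, ?_⟩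
    · intro h
      refine hM.eigenvectorBasis.orthonormal.ne_zero j ?_
      ext i
      exact congrFun h i
    · rw [hM.mulVec_eigenvectorBasis, hμdef, hj]
  · rintro r hr
    obtain ⟨v, hv0, hv⟩ := (aux_hasEig_iff M r).mp hr
    have h1 : r * (v ⬝ᵥ v) ≤ μ * (v ⬝ᵥ v) := by
      calc r * (v ⬝ᵥ v) = v ⬝ᵥ (r • v) := by simp [dotProduct_smul, smul_eq_mul]
      _ = v ⬝ᵥ M *ᵥ v := by rw [hv]
      _ ≤ μ * (v ⬝ᵥ v) := aux_rayleigh_bound M hM μ hμub v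
    exact le_of_mul_le_mul_right (by linarith) (aux_dotProduct_self_pos hv0)

theorem aux_lambdaMaxR_rayleigh {k : ℕ} [Nonempty (Fin k)] (M : Matrix (Fin k) (Fin k) ℝ)
    (hM : M.IsHermitian) (x : Fin k → ℝ) :
    x ⬝ᵥ M *ᵥ x ≤ lambdaMaxR M * (x ⬝ᵥ x) := by
  have hgr := aux_lambdaMaxR_isGreatest M hM
  have : lambdaMaxR M = Finset.univ.sup' (Finset.univ_nonempty (α := Fin k)) hM.eigenvalues :=
    hgr.csSup_eq
  rw [this]
  exact aux_rayleigh_bound M hM _ (fun i => Finset.le_sup' _ (Finset.mem_univ i)) x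

/-! ### Auxiliary lemmas: quantum trace algebra -/

variable {d : ℕ}

theorem aux_conj_trace_mul {ρ A : Matrix (Fin d) (Fin d) ℂ} (hρ : ρ.IsHermitian)
    (hA : A.IsHermitian) : star ((ρ * A).trace) = (ρ * A).trace := by
  rw [← Matrix.trace_conjTranspose, conjTranspose_mul, hρ.eq, hA.eq, Matrix.trace_mul_comm]

theorem aux_cent_herm {ρ A : Matrix (Fin d) (Fin d) ℂ} (hρ : ρ.IsHermitian)
    (hA : A.IsHermitian) : (A - (ρ * A).trace • 1).IsHermitian := by
  rw [Matrix.IsHermitian, conjTranspose_sub, hA.eq, conjTranspose_smul, conjTranspose_one,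
    aux_conj_trace_mul hρ hA]

theorem aux_k1 (ρ A B : Matrix (Fin d) (Fin d) ℂ) (hρ1 : ρ.trace = 1) :
    (ρ * ((A - (ρ * A).trace • 1) * (B - (ρ * B).trace • 1))).trace
      = (ρ * (A * B)).trace - (ρ * A).trace * (ρ * B).trace := by
  simp only [Matrix.sub_mul, Matrix.mul_sub, Matrix.mul_smul, Matrix.smul_mul, Matrix.mul_one,
    Matrix.trace_sub, Matrix.trace_smul, smul_smul, smul_eq_mul, hρ1]
  rw [← Matrix.mul_assoc, Matrix.one_mul]
  ring

theorem aux_k2 (ρ A B : Matrix (Fin d) (Fin d) ℂ) (hρ : ρ.IsHermitian) (hρ1 : ρ.trace = 1)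
    (hA : A.IsHermitian) (hB : B.IsHermitian) :
    (starRingEnd ℂ) ((ρ * ((A - (ρ * A).trace • 1) * (B - (ρ * B).trace • 1))).trace)
      = (ρ * (B * A)).trace - (ρ * A).trace * (ρ * B).trace := by
  have h1 : (starRingEnd ℂ) ((ρ * ((A - (ρ * A).trace • 1) * (B - (ρ * B).trace • 1))).trace)
      = (ρ * ((B - (ρ * B).trace • 1) * (A - (ρ * A).trace • 1))).trace := by
    rw [starRingEnd_apply, ← Matrix.trace_conjTranspose, conjTranspose_mul, conjTranspose_mul,
      (aux_cent_herm hρ hA).eq, (aux_cent_herm hρ hB).eq, hρ.eq, ← Matrix.mul_assoc,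
      Matrix.trace_mul_comm, Matrix.mul_assoc]
  rw [h1, aux_k1 ρ B A hρ1, mul_comm]

theorem aux_k3 (ρ A B : Matrix (Fin d) (Fin d) ℂ) (hρ : ρ.IsHermitian) (hρ1 : ρ.trace = 1)
    (hA : A.IsHermitian) (hB : B.IsHermitian) :
    Real.sqrt (‖(ρ * (A * B - B * A)).trace / (2 * Complex.I)‖ ^ 2 +
        ‖(1 / 2) * (ρ * (A * B + B * A)).trace -
          (ρ * A).trace * (ρ * B).trace‖ ^ 2)
      = ‖(ρ * ((A - (ρ * A).trace • 1) * (B - (ρ * B).trace • 1))).trace‖ := by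
  set c := (ρ * ((A - (ρ * A).trace • 1) * (B - (ρ * B).trace • 1))).trace with hc
  have hc1 : c = (ρ * (A * B)).trace - (ρ * A).trace * (ρ * B).trace := aux_k1 ρ A B hρ1
  have hc2 : (starRingEnd ℂ) c = (ρ * (B * A)).trace - (ρ * A).trace * (ρ * B).trace :=
    aux_k2 ρ A B hρ hρ1 hA hB
  have hcomm : (ρ * (A * B - B * A)).trace = c - (starRingEnd ℂ) c := by
    rw [Matrix.mul_sub, Matrix.trace_sub, hc2, hc1]; ring
  have hanti : (1 / 2 : ℂ) * (ρ * (A * B + B * A)).trace - (ρ * A).trace * (ρ * B).trace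
      = ((c.re : ℝ) : ℂ) := by
    have hre := Complex.add_conj c
    rw [Matrix.mul_add, Matrix.trace_add]
    push_cast at hre ⊢
    linear_combination (hre - hc1 - hc2) / 2
  have hcommdiv : (ρ * (A * B - B * A)).trace / (2 * Complex.I) = ((c.im : ℝ) : ℂ) := by
    rw [hcomm, Complex.sub_conj, mul_comm]
    field_simp
    push_cast; ring
  rw [hcommdiv, hanti, Complex.norm_real, Complex.norm_real, Real.norm_eq_abs, Real.norm_eq_abs,
    Complex.norm_def, Complex.normSq_apply, sq_abs, sq_abs]
  congr 1
  ring

theorem aux_trace_sandwich (S M N ρ : Matrix (Fin d) (Fin d) ℂ) (hS : S * S = ρ) :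
    (S * M * (N * S)).trace = (ρ * (M * N)).trace := by
  rw [Matrix.trace_mul_comm, ← Matrix.mul_assoc, Matrix.mul_assoc N S S, hS,
    ← Matrix.mul_assoc, Matrix.trace_mul_comm, Matrix.mul_assoc, Matrix.trace_mul_comm,
    ← Matrix.mul_assoc, Matrix.mul_assoc N ρ M, Matrix.trace_mul_comm N (ρ * M)]

theorem aux_sqrt_herm (ρ : Matrix (Fin d) (Fin d) ℂ) (hρ : ρ.PosSemidef) :
    ((hρ.1.eigenvectorUnitary : Matrix (Fin d) (Fin d) ℂ) *
      diagonal ((↑) ∘ (√·) ∘ hρ.1.eigenvalues) * (star hρ.1.eigenvectorUnitary : Matrix (Fin d) (Fin d) ℂ))ᴴ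
    = (hρ.1.eigenvectorUnitary : Matrix (Fin d) (Fin d) ℂ) *
      diagonal ((↑) ∘ (√·) ∘ hρ.1.eigenvalues) * (star hρ.1.eigenvectorUnitary : Matrix (Fin d) (Fin d) ℂ) := by
  rw [star_eq_conjTranspose]
  refine isHermitian_mul_mul_conjTranspose _ (isHermitian_diagonal_of_self_adjoint _ ?_)
  ext i
  simp
theorem aux_sqrt_sq (ρ : Matrix (Fin d) (Fin d) ℂ) (hρ : ρ.PosSemidef) :
    (hρ.1.eigenvectorUnitary : Matrix (Fin d) (Fin d) ℂ) *
      diagonal ((↑) ∘ (√·) ∘ hρ.1.eigenvalues) * (star hρ.1.eigenvectorUnitary : Matrix (Fin d) (Fin d) ℂ) *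
    ((hρ.1.eigenvectorUnitary : Matrix (Fin d) (Fin d) ℂ) *
      diagonal ((↑) ∘ (√·) ∘ hρ.1.eigenvalues) * (star hρ.1.eigenvectorUnitary : Matrix (Fin d) (Fin d) ℂ)) = ρ := by
  have hu : (star hρ.1.eigenvectorUnitary : Matrix (Fin d) (Fin d) ℂ) * hρ.1.eigenvectorUnitary = 1 :=
    Unitary.star_mul_self_of_mem hρ.1.eigenvectorUnitary.2
  conv_rhs => rw [hρ.1.spectral_theorem, Unitary.conjStarAlgAut_apply]
  rw [show ∀ P Q R S T : Matrix (Fin d) (Fin d) ℂ, P * Q * R * (S * Q * T) = P * Q * (R * S) * Q * T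
    from fun P Q R S T => by simp only [Matrix.mul_assoc], hu, Matrix.mul_one, Matrix.mul_assoc _ (diagonal _) (diagonal _), diagonal_mul_diagonal]
  congr 3
  funext i
  simp [← Complex.ofReal_mul, Real.mul_self_sqrt (hρ.eigenvalues_nonneg i)]

theorem aux_k4 (ρ : Matrix (Fin d) (Fin d) ℂ) (hρ : ρ.PosSemidef)
    (A B : Matrix (Fin d) (Fin d) ℂ) (hA : A.IsHermitian) (a b : ℝ) :
    ((((a:ℂ))⁻¹ • ((A - (ρ * A).trace • 1) * ((hρ.1.eigenvectorUnitary : Matrix (Fin d) (Fin d) ℂ) *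
      diagonal (((↑) : ℝ → ℂ) ∘ (√·) ∘ hρ.1.eigenvalues) * (star hρ.1.eigenvectorUnitary : Matrix (Fin d) (Fin d) ℂ))))ᴴ *
      (((b:ℂ))⁻¹ • ((B - (ρ * B).trace • 1) * ((hρ.1.eigenvectorUnitary : Matrix (Fin d) (Fin d) ℂ) *
      diagonal (((↑) : ℝ → ℂ) ∘ (√·) ∘ hρ.1.eigenvalues) * (star hρ.1.eigenvectorUnitary : Matrix (Fin d) (Fin d) ℂ))))).trace
      = ((a:ℂ))⁻¹ * ((b:ℂ))⁻¹ *
        (ρ * ((A - (ρ * A).trace • 1) * (B - (ρ * B).trace • 1))).trace := by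
  have hS := aux_sqrt_herm ρ hρ
  have hstara : star ((a:ℂ)⁻¹) = ((a:ℂ))⁻¹ := by
    rw [star_inv₀, Complex.star_def, Complex.conj_ofReal]
  rw [conjTranspose_smul, conjTranspose_mul, hS, (aux_cent_herm hρ.1 hA).eq, hstara,
    smul_mul_assoc, mul_smul_comm, Matrix.trace_smul, Matrix.trace_smul, smul_eq_mul,
    smul_eq_mul, ← mul_assoc,
    aux_trace_sandwich _ _ _ ρ (aux_sqrt_sq ρ hρ)]

theorem stmt9 {d n m : ℕ} (ρ : Matrix (Fin d) (Fin d) ℂ) (hρ : ρ.PosSemidef)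
    (hρ1 : ρ.trace = 1)
    (A : Fin n → Matrix (Fin d) (Fin d) ℂ) (B : Fin m → Matrix (Fin d) (Fin d) ℂ)
    (hA : ∀ i, (A i).IsHermitian) (hB : ∀ j, (B j).IsHermitian)
    (hΔA : ∀ i, qDev ρ (A i) ≠ 0) (hΔB : ∀ j, qDev ρ (B j) ≠ 0)
    (X : Fin n → Matrix (Fin d) (Fin d) ℂ) (Y : Fin m → Matrix (Fin d) (Fin d) ℂ)
    (hX : ∀ i, X i = ((qDev ρ (A i) : ℂ))⁻¹ • ((A i - qMean ρ (A i) • 1) * ((hρ.1.eigenvectorUnitary : Matrix (Fin d) (Fin d) ℂ) *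
      diagonal ((↑) ∘ (√·) ∘ hρ.1.eigenvalues) * (star hρ.1.eigenvectorUnitary : Matrix (Fin d) (Fin d) ℂ))))
    (hY : ∀ j, Y j = ((qDev ρ (B j) : ℂ))⁻¹ • ((B j - qMean ρ (B j) • 1) * ((hρ.1.eigenvectorUnitary : Matrix (Fin d) (Fin d) ℂ) *
      diagonal ((↑) ∘ (√·) ∘ hρ.1.eigenvalues) * (star hρ.1.eigenvectorUnitary : Matrix (Fin d) (Fin d) ℂ))))
    (G : Matrix (Fin n) (Fin m) ℝ)
    (hG : ∀ i j, G i j = ‖((X i)ᴴ * Y j).trace‖)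
    (hcov : ∃ i j, qMean ρ ((A i - qMean ρ (A i) • 1) * (B j - qMean ρ (B j) • 1)) ≠ 0) :
    Real.sqrt (∑ i, qVar ρ (A i)) * Real.sqrt (∑ j, qVar ρ (B j)) ≥
      (sigmaMax G)⁻¹ * ∑ i, ∑ j,
        Real.sqrt (‖qMean ρ (A i * B j - B j * A i) / (2 * Complex.I)‖ ^ 2 +
          ‖(1 / 2) * qMean ρ (A i * B j + B j * A i) -
            qMean ρ (A i) * qMean ρ (B j)‖ ^ 2) := by
  obtain ⟨i₀, j₀, hc0⟩ := hcov
  haveI : Nonempty (Fin n) := ⟨i₀⟩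
  haveI : Nonempty (Fin m) := ⟨j₀⟩
  -- positivity of deviations
  have ha : ∀ i, 0 < qDev ρ (A i) := fun i =>
    lt_of_le_of_ne (Real.sqrt_nonneg _) (Ne.symm (hΔA i))
  have hb : ∀ j, 0 < qDev ρ (B j) := fun j =>
    lt_of_le_of_ne (Real.sqrt_nonneg _) (Ne.symm (hΔB j))
  have hqa : ∀ i, qVar ρ (A i) = (qDev ρ (A i))^2 := fun i =>
    (Real.sq_sqrt (le_of_lt (Real.sqrt_pos.mp (ha i)))).symm
  have hqb : ∀ j, qVar ρ (B j) = (qDev ρ (B j))^2 := fun j =>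
    (Real.sq_sqrt (le_of_lt (Real.sqrt_pos.mp (hb j)))).symm
  set a : Fin n → ℝ := fun i => qDev ρ (A i) with hadef
  set b : Fin m → ℝ := fun j => qDev ρ (B j) with hbdef
  -- G entries
  have hGval : ∀ i j, G i j = (a i)⁻¹ * (b j)⁻¹ *
      ‖(ρ * ((A i - (ρ * A i).trace • 1) * (B j - (ρ * B j).trace • 1))).trace‖ := by
    intro i j
    rw [hG i j, hX i, hY j]
    rw [show qMean ρ (A i) = (ρ * A i).trace from rfl, show qMean ρ (B j) = (ρ * B j).trace from rfl,
      aux_k4 ρ hρ (A i) (B j) (hA i) (a i) (b j)]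
    rw [norm_mul, norm_mul, norm_inv, norm_inv, Complex.norm_real, Complex.norm_real,
      Real.norm_eq_abs, Real.norm_eq_abs, abs_of_pos (ha i), abs_of_pos (hb j)]
  -- term identity
  have hterm : ∀ i j,
      Real.sqrt (‖qMean ρ (A i * B j - B j * A i) / (2 * Complex.I)‖ ^ 2 +
        ‖(1 / 2) * qMean ρ (A i * B j + B j * A i) -
          qMean ρ (A i) * qMean ρ (B j)‖ ^ 2) = G i j * (a i * b j) := by
    intro i j
    have h3 := aux_k3 ρ (A i) (B j) hρ.1 hρ1 (hA i) (hB j)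
    rw [show qMean ρ (A i * B j - B j * A i) = (ρ * (A i * B j - B j * A i)).trace from rfl,
      show qMean ρ (A i * B j + B j * A i) = (ρ * (A i * B j + B j * A i)).trace from rfl,
      show qMean ρ (A i) = (ρ * A i).trace from rfl,
      show qMean ρ (B j) = (ρ * B j).trace from rfl, h3, hGval i j]
    field_simp [(ha i).ne', (hb j).ne']
    rw [mul_assoc]
    exact (mul_div_cancel_right₀ _ (mul_ne_zero (ha i).ne' (hb j).ne')).symm
  -- nonnegativity of G
  have hGnn : ∀ i j, 0 ≤ G i j := fun i j => (hG i j) ▸ norm_nonneg _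
  -- G i₀ j₀ > 0
  have hG0 : 0 < G i₀ j₀ := by
    rw [hGval i₀ j₀]
    have h0 : 0 < ‖
        (ρ * ((A i₀ - (ρ * A i₀).trace • 1) * (B j₀ - (ρ * B j₀).trace • 1))).trace‖ :=
      norm_pos_iff.mpr hc0
    exact mul_pos (mul_pos (inv_pos.mpr (ha i₀)) (inv_pos.mpr (hb j₀))) h0
  -- Gram matrix
  set M : Matrix (Fin m) (Fin m) ℝ := Gᵀ * G with hMdef
  have hM : M.IsHermitian := by
    rw [hMdef, ← conjTranspose_eq_transpose_of_trivial]
    exact isHermitian_conjTranspose_mul_self G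
  have hgram : ∀ x : Fin m → ℝ, x ⬝ᵥ M *ᵥ x = (G *ᵥ x) ⬝ᵥ (G *ᵥ x) := by
    intro x
    rw [hMdef, ← mulVec_mulVec, dotProduct_mulVec, vecMul_transpose]
  have hray : ∀ x : Fin m → ℝ, x ⬝ᵥ M *ᵥ x ≤ lambdaMaxR M * (x ⬝ᵥ x) :=
    aux_lambdaMaxR_rayleigh M hM
  -- lambda positivity
  have hLpos : 0 < lambdaMaxR M := by
    have hx := hray (Pi.single j₀ 1)
    rw [hgram] at hx
    have hGx : G *ᵥ Pi.single j₀ 1 = fun i => G i j₀ := by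
      funext i
      simp [mulVec_single]
    have h1 : (G i₀ j₀)^2 ≤ (G *ᵥ Pi.single j₀ 1) ⬝ᵥ (G *ᵥ Pi.single j₀ 1) := by
      rw [hGx]
      calc (G i₀ j₀)^2 = G i₀ j₀ * G i₀ j₀ := sq (G i₀ j₀) ▸ by ring
      _ ≤ ∑ i, G i j₀ * G i j₀ := Finset.single_le_sum
          (fun i _ => mul_self_nonneg (G i j₀)) (Finset.mem_univ i₀)
    have h2 : (Pi.single j₀ 1 : Fin m → ℝ) ⬝ᵥ Pi.single j₀ 1 = 1 := by
      simp [dotProduct_single]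
    rw [h2, mul_one] at hx
    nlinarith [sq_nonneg (G i₀ j₀)]
  have hσpos : 0 < sigmaMax G := Real.sqrt_pos.mpr hLpos
  have hσsq : sigmaMax G * sigmaMax G = lambdaMaxR M := Real.mul_self_sqrt (le_of_lt hLpos)
  -- rewrite the sum
  rw [ge_iff_le]
  have hsum : (∑ i, ∑ j,
      Real.sqrt (‖qMean ρ (A i * B j - B j * A i) / (2 * Complex.I)‖ ^ 2 +
        ‖(1 / 2) * qMean ρ (A i * B j + B j * A i) -
          qMean ρ (A i) * qMean ρ (B j)‖ ^ 2)) = a ⬝ᵥ (G *ᵥ b) := by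
    rw [dotProduct]
    refine Finset.sum_congr rfl fun i _ => ?_
    rw [mulVec, dotProduct, Finset.mul_sum]
    refine Finset.sum_congr rfl fun j _ => ?_
    rw [hterm i j]; ring
  rw [hsum]
  -- Cauchy-Schwarz and the spectral bound
  set w : Fin n → ℝ := G *ᵥ b with hwdef
  have hwnn : ∀ i, 0 ≤ w i := by
    intro i
    rw [hwdef, mulVec, dotProduct]
    exact Finset.sum_nonneg fun j _ => mul_nonneg (hGnn i j) (le_of_lt (hb j))
  have hSnn : 0 ≤ a ⬝ᵥ w :=
    Finset.sum_nonneg fun i _ => mul_nonneg (le_of_lt (ha i)) (hwnn i)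
  have hCS : (a ⬝ᵥ w)^2 ≤ (∑ i, (a i)^2) * (∑ i, (w i)^2) :=
    Finset.sum_mul_sq_le_sq_mul_sq Finset.univ a w
  have hww : ∑ i, (w i)^2 ≤ lambdaMaxR M * (∑ j, (b j)^2) := by
    have := hray b
    rw [hgram b, ← hwdef] at this
    calc ∑ i, (w i)^2 = w ⬝ᵥ w := by
          rw [dotProduct]; exact Finset.sum_congr rfl fun i _ => (sq (w i))
    _ ≤ lambdaMaxR M * (b ⬝ᵥ b) := this
    _ = lambdaMaxR M * (∑ j, (b j)^2) := by
          rw [dotProduct]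
          congr 1
          exact Finset.sum_congr rfl fun j _ => (sq (b j)).symm
  have hfin : a ⬝ᵥ w ≤ sigmaMax G * (Real.sqrt (∑ i, (a i)^2) * Real.sqrt (∑ j, (b j)^2)) := by
    have h1 : (a ⬝ᵥ w)^2 ≤ (∑ i, (a i)^2) * (lambdaMaxR M * (∑ j, (b j)^2)) :=
      le_trans hCS (mul_le_mul_of_nonneg_left hww (Finset.sum_nonneg fun i _ => sq_nonneg _))
    have h2 : a ⬝ᵥ w = Real.sqrt ((a ⬝ᵥ w)^2) := (Real.sqrt_sq hSnn).symm
    rw [h2]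
    calc Real.sqrt ((a ⬝ᵥ w)^2) ≤ Real.sqrt ((∑ i, (a i)^2) * (lambdaMaxR M * (∑ j, (b j)^2))) :=
          Real.sqrt_le_sqrt h1
    _ = sigmaMax G * (Real.sqrt (∑ i, (a i)^2) * Real.sqrt (∑ j, (b j)^2)) := by
          rw [Real.sqrt_mul (Finset.sum_nonneg fun i _ => sq_nonneg _),
            Real.sqrt_mul (le_of_lt hLpos), show Real.sqrt (lambdaMaxR M) = sigmaMax G from rfl]
          ring
  rw [inv_mul_le_iff₀ hσpos]
  calc a ⬝ᵥ w ≤ sigmaMax G * (Real.sqrt (∑ i, (a i)^2) * Real.sqrt (∑ j, (b j)^2)) := hfin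
  _ = sigmaMax G * (Real.sqrt (∑ i, qVar ρ (A i)) * Real.sqrt (∑ j, qVar ρ (B j))) := by
        congr 2
        · congr 1; exact Finset.sum_congr rfl fun i _ => (hqa i).symm
        · congr 1; exact Finset.sum_congr rfl fun j _ => (hqb j).symm
end

section
/- For n Hermitian observables A_1,...,A_n and a density matrix ρ, ∑_{i=1}^n (ΔA_i)² ≥ (1/(n−1)) ∑_{1≤i<j≤n} |⟨[A_i,A_j]⟩|, where n ≥ 2. -/
open Matrix BigOperators
open scoped ComplexOrder

lemma psd_trace_nonneg {m : ℕ} {M : Matrix (Fin m) (Fin m) ℂ} (h : M.PosSemidef) :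
    0 ≤ M.trace := by
  rw [Matrix.trace]
  refine Finset.sum_nonneg fun i _ => ?_
  have := h.diag_nonneg (i := i)
  simpa [dotProduct, Pi.single_apply, Finset.sum_ite_eq'] using this

lemma trace_rho_sq_nonneg {d : ℕ} {ρ : Matrix (Fin d) (Fin d) ℂ} (hρ : ρ.PosSemidef)
    (M : Matrix (Fin d) (Fin d) ℂ) : 0 ≤ (ρ * (Mᴴ * M)).trace := by
  have h1 : (ρ * (Mᴴ * M)).trace = (M * ρ * Mᴴ).trace := by
    rw [Matrix.trace_mul_comm, Matrix.mul_assoc, Matrix.trace_mul_comm, Matrix.mul_assoc]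
  rw [h1]
  exact psd_trace_nonneg (hρ.mul_mul_conjTranspose_same M)

lemma conj_trace_mul {d : ℕ} {ρ : Matrix (Fin d) (Fin d) ℂ} (hρ : ρ.IsHermitian)
    {A : Matrix (Fin d) (Fin d) ℂ} (hA : A.IsHermitian) :
    starRingEnd ℂ ((ρ * A).trace) = (ρ * A).trace := by
  have : (ρ * A)ᴴ = A * ρ := by rw [Matrix.conjTranspose_mul, hρ.eq, hA.eq]
  calc starRingEnd ℂ ((ρ * A).trace) = ((ρ * A)ᴴ).trace := by
        rw [Matrix.trace_conjTranspose]; rfl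
    _ = (ρ * A).trace := by rw [this, Matrix.trace_mul_comm]

lemma key {d : ℕ} {ρ : Matrix (Fin d) (Fin d) ℂ} (hρ : ρ.PosSemidef) (hρ1 : ρ.trace = 1)
    {A B : Matrix (Fin d) (Fin d) ℂ} (hA : A.IsHermitian) (hB : B.IsHermitian) :
    ‖(ρ * (A * B - B * A)).trace‖ ≤ qVar ρ A + qVar ρ B := by
  set μ := (ρ * A).trace with hμd
  set ν := (ρ * B).trace with hνd
  have hμ : (starRingEnd ℂ) μ = μ := conj_trace_mul hρ.1 hA
  have hν : (starRingEnd ℂ) ν = ν := conj_trace_mul hρ.1 hB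
  set A' : Matrix (Fin d) (Fin d) ℂ := A - μ • 1 with hA'd
  set B' : Matrix (Fin d) (Fin d) ℂ := B - ν • 1 with hB'd
  have hA' : A'ᴴ = A' := by
    simp [hA'd, Matrix.conjTranspose_sub, Matrix.conjTranspose_smul, hA.eq, hμ]
  have hB' : B'ᴴ = B' := by
    simp [hB'd, Matrix.conjTranspose_sub, Matrix.conjTranspose_smul, hB.eq, hν]
  set c := (ρ * (A * B - B * A)).trace with hcd
  have hcomm : A' * B' - B' * A' = A * B - B * A := by
    simp only [hA'd, hB'd, Matrix.sub_mul, Matrix.mul_sub, Matrix.smul_mul, Matrix.mul_smul,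
      Matrix.one_mul, Matrix.mul_one]
    module
  have hre : c.re = 0 := by
    have h1 : (ρ * (A * B - B * A))ᴴ = (B * A - A * B) * ρ := by
      simp [Matrix.conjTranspose_mul, Matrix.conjTranspose_sub, hA.eq, hB.eq, hρ.1.eq,
        Matrix.mul_sub, Matrix.sub_mul]
    have h2 : star c = -c := by
      rw [hcd, ← Matrix.trace_conjTranspose, h1, Matrix.trace_mul_comm, Matrix.mul_sub,
        Matrix.mul_sub, Matrix.trace_sub, Matrix.trace_sub]
      ring
    have h3 := congrArg Complex.re h2
    simp only [Complex.star_def, Complex.conj_re, Complex.neg_re] at h3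
    linarith
  have htA : (ρ * (A' * A')).trace = (ρ * (A * A)).trace - μ ^ 2 := by
    simp only [hA'd, Matrix.sub_mul, Matrix.mul_sub, Matrix.smul_mul, Matrix.mul_smul,
      Matrix.one_mul, Matrix.mul_one, smul_smul, Matrix.trace_sub, Matrix.trace_smul,
      Matrix.trace_one, smul_eq_mul, ← hμd, hρ1]
    ring_nf
  have htB : (ρ * (B' * B')).trace = (ρ * (B * B)).trace - ν ^ 2 := by
    simp only [hB'd, Matrix.sub_mul, Matrix.mul_sub, Matrix.smul_mul, Matrix.mul_smul,
      Matrix.one_mul, Matrix.mul_one, smul_smul, Matrix.trace_sub, Matrix.trace_smul,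
      Matrix.trace_one, smul_eq_mul, ← hνd, hρ1]
    ring_nf
  have expand : ∀ s : ℂ, star s = -s → s * s = -1 →
      (A' + s • B')ᴴ * (A' + s • B') =
      A' * A' + B' * B' + s • (A' * B' - B' * A') := by
    intro s hs1 hs2
    have hs3 : star s * s = 1 := by rw [hs1]; linear_combination -hs2
    rw [Matrix.conjTranspose_add, Matrix.conjTranspose_smul, hA', hB', hs1]
    simp only [Matrix.add_mul, Matrix.mul_add, Matrix.smul_mul, Matrix.mul_smul, smul_smul,
      neg_smul, neg_mul, hs2, neg_neg, one_smul, smul_sub]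
    match_scalars <;> first | ring1 | linear_combination -hs2
  have pos : ∀ s : ℂ, star s = -s → s * s = -1 →
      0 ≤ qVar ρ A + qVar ρ B + (s * c).re := by
    intro s hs1 hs2
    have h0 := trace_rho_sq_nonneg hρ (A' + s • B')
    rw [expand s hs1 hs2] at h0
    have h4 : (ρ * (A' * A' + B' * B' + s • (A' * B' - B' * A'))).trace =
        (ρ * (A' * A')).trace + (ρ * (B' * B')).trace + s * c := by
      rw [Matrix.mul_add, Matrix.mul_add, Matrix.trace_add, Matrix.trace_add,
        Matrix.mul_smul, Matrix.trace_smul, hcomm, smul_eq_mul, hcd]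
    rw [h4, htA, htB] at h0
    have h5 := (Complex.le_def.mp h0).1
    simp only [Complex.zero_re, Complex.add_re, Complex.sub_re] at h5
    simp only [qVar, ← hμd, ← hνd, Complex.sub_re]
    linarith [h5]
  have p1 := pos (Complex.I) (by simp [Complex.conj_I]) (by simp)
  have p2 := pos (-Complex.I) (by simp [Complex.conj_I]) (by simp)
  have hIm1 : (Complex.I * c).re = -c.im := by
    simp [Complex.mul_re, hre]
  have hIm2 : ((-Complex.I) * c).re = c.im := by
    simp [Complex.mul_re, hre]
  rw [hIm1] at p1
  rw [hIm2] at p2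
  have habs : ‖c‖ = |c.im| := by
    rw [Complex.norm_def, Complex.normSq_apply, hre]
    simp [Real.sqrt_mul_self_eq_abs]
  rw [habs]
  rcases abs_cases c.im with ⟨h, _⟩ | ⟨h, _⟩ <;> rw [h] <;> linarith

theorem stmt13_aux {d n : ℕ} (hn : 2 ≤ n) (ρ : Matrix (Fin d) (Fin d) ℂ)
    (hρ : ρ.PosSemidef) (hρ1 : ρ.trace = 1)
    (A : Fin n → Matrix (Fin d) (Fin d) ℂ) (hA : ∀ i, (A i).IsHermitian) :
    ∑ i, qVar ρ (A i) ≥ (1 / ((n : ℝ) - 1)) *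
      ∑ i, ∑ j, if i < j then ‖((ρ * (A i * A j - A j * A i)).trace)‖ else 0 := by
  set V : Fin n → ℝ := fun i => qVar ρ (A i) with hV
  have hn1 : (0:ℝ) < (n:ℝ) - 1 := by
    have : (2:ℝ) ≤ (n:ℝ) := by exact_mod_cast hn
    linarith
  rw [ge_iff_le, one_div, inv_mul_le_iff₀ hn1]
  have step1 : ∑ i, ∑ j, (if i < j then ‖((ρ * (A i * A j - A j * A i)).trace)‖ else 0)
      ≤ ∑ i, ∑ j, (if i < j then V i + V j else 0) := by
    refine Finset.sum_le_sum fun i _ => Finset.sum_le_sum fun j _ => ?_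
    by_cases h : i < j
    · simpa [h] using key hρ hρ1 (hA i) (hA j)
    · simp [h]
  have split : ∀ i j : Fin n, (if i < j then V i + V j else 0 : ℝ)
      = (if i < j then V i else 0) + (if i < j then V j else 0) := by
    intro i j; by_cases h : i < j <;> simp [h]
  have step2 : ∑ i, ∑ j, (if i < j then V i + V j else 0 : ℝ) = ((n:ℝ) - 1) * ∑ i, V i := by
    simp only [split, Finset.sum_add_distrib]
    rw [show (∑ i, ∑ j, (if i < j then V j else 0 : ℝ))
        = ∑ j, ∑ i, (if i < j then V j else 0 : ℝ) from Finset.sum_comm]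
    rw [← Finset.sum_add_distrib]
    simp only [← Finset.sum_add_distrib]
    have h7 : ∀ x : Fin n, ∑ y, ((if x < y then V x else 0) + (if y < x then V x else 0) : ℝ)
        = ∑ y, (if x ≠ y then V x else 0 : ℝ) := by
      intro x
      refine Finset.sum_congr rfl fun y _ => ?_
      rcases lt_trichotomy x y with h | h | h
      · simp [h, not_lt_of_gt h, h.ne]
      · simp [h]
      · simp [h, not_lt_of_gt h, (h.ne).symm, Ne.symm h.ne]
    have h6 : ∀ x : Fin n, ∑ y, (if x ≠ y then V x else 0 : ℝ) = ((n:ℝ)-1) * V x := by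
      intro x
      have e : ∀ y, (if x ≠ y then V x else 0 : ℝ) = V x - (if x = y then V x else 0) := by
        intro y; by_cases h : x = y <;> simp [h]
      simp only [e, Finset.sum_sub_distrib, Finset.sum_const, Finset.sum_ite_eq,
        Finset.mem_univ, if_true, Finset.card_univ, Fintype.card_fin, nsmul_eq_mul]
      ring
    rw [Finset.sum_congr rfl fun x _ => (h7 x).trans (h6 x), ← Finset.mul_sum]
  calc ∑ i, ∑ j, (if i < j then ‖((ρ * (A i * A j - A j * A i)).trace)‖ else 0)
      ≤ ∑ i, ∑ j, (if i < j then V i + V j else 0) := step1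
    _ = ((n:ℝ) - 1) * ∑ i, V i := step2


theorem stmt13 {d n : ℕ} (hn : 2 ≤ n) (ρ : Matrix (Fin d) (Fin d) ℂ)
    (hρ : ρ.PosSemidef) (hρ1 : ρ.trace = 1)
    (A : Fin n → Matrix (Fin d) (Fin d) ℂ) (hA : ∀ i, (A i).IsHermitian) :
    ∑ i, qVar ρ (A i) ≥ (1 / ((n : ℝ) - 1)) *
      ∑ i, ∑ j, if i < j then ‖qMean ρ (A i * A j - A j * A i)‖ else 0 := by
  simpa only [qMean] using stmt13_aux hn ρ hρ hρ1 A hA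
end

section
/- Let A_1, A_2, A_3 be Hermitian observables and ρ a density matrix on a finite-dimensional Hilbert space, with all ΔA_i ≠ 0, and let M be the 3×3 Gram matrix M_{ij} = Tr(P_i†P_j) with P_i = (A_i − ⟨A_i⟩I)√ρ/ΔA_i. If λ_max(M) ≤ 1, then ∑_{i=1}^3 (ΔA_i)² ≥ [Δ(A_1+A_2+A_3)]². -/
open Matrix BigOperators
open scoped ComplexOrder

/-- The square root of a positive semidefinite matrix, as defined in the older Mathlib
(`Matrix.PosSemidef.sqrt`, since removed). -/
noncomputable def Matrix.PosSemidef.sqrt {n : Type*} [Fintype n] [DecidableEq n] {𝕜 : Type*} [RCLike 𝕜]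
    {A : Matrix n n 𝕜} (hA : A.PosSemidef) : Matrix n n 𝕜 :=
  hA.1.eigenvectorUnitary.1 * diagonal ((↑) ∘ (√·) ∘ hA.1.eigenvalues) *
  (star hA.1.eigenvectorUnitary : Matrix n n 𝕜)

lemma Matrix.PosSemidef.posSemidef_sqrt {n : Type*} [Fintype n] [DecidableEq n] {𝕜 : Type*}
    [RCLike 𝕜] {A : Matrix n n 𝕜} (hA : A.PosSemidef) : hA.sqrt.PosSemidef := by
  unfold Matrix.PosSemidef.sqrt
  rw [Matrix.star_eq_conjTranspose]
  apply Matrix.PosSemidef.mul_mul_conjTranspose_same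
  refine Matrix.posSemidef_diagonal_iff.mpr fun i => ?_
  simp only [Function.comp_apply]
  exact RCLike.ofReal_nonneg.mpr (Real.sqrt_nonneg _)

lemma Matrix.PosSemidef.sqrt_mul_self {n : Type*} [Fintype n] [DecidableEq n] {𝕜 : Type*}
    [RCLike 𝕜] {A : Matrix n n 𝕜} (hA : A.PosSemidef) : hA.sqrt * hA.sqrt = A := by
  unfold Matrix.PosSemidef.sqrt
  have h1 : (star hA.1.eigenvectorUnitary : Matrix n n 𝕜) * (hA.1.eigenvectorUnitary : Matrix n n 𝕜) = 1 := by
    simp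
  simp only [Matrix.mul_assoc]
  rw [← Matrix.mul_assoc (star hA.1.eigenvectorUnitary : Matrix n n 𝕜), h1, Matrix.one_mul,
    ← Matrix.mul_assoc (diagonal _), Matrix.diagonal_mul_diagonal]
  conv_rhs => rw [hA.1.spectral_theorem, Unitary.conjStarAlgAut_apply]
  rw [← Matrix.mul_assoc]
  congr 3
  funext i
  simp only [Function.comp_apply]
  rw [← RCLike.ofReal_mul, Real.mul_self_sqrt (hA.eigenvalues_nonneg i)]

lemma eig_hasEig {n : ℕ} {M : Matrix (Fin n) (Fin n) ℂ} (hM : M.IsHermitian) (i : Fin n) :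
    Module.End.HasEigenvalue (Matrix.toLin' M) ((hM.eigenvalues i : ℝ) : ℂ) := by
  apply Module.End.hasEigenvalue_of_hasEigenvector (x := ⇑(hM.eigenvectorBasis i))
  constructor
  · rw [Module.End.mem_eigenspace_iff, Matrix.toLin'_apply, hM.mulVec_eigenvectorBasis]
    ext j
    simp [Complex.real_smul]
  · intro h
    have h2 : hM.eigenvectorBasis i = 0 := by
      ext j
      exact congrFun h j
    exact hM.eigenvectorBasis.toBasis.ne_zero i (by simpa using h2)

lemma eig_bddAbove {n : ℕ} (M : Matrix (Fin n) (Fin n) ℂ) :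
    BddAbove {r : ℝ | Module.End.HasEigenvalue (Matrix.toLin' M) (r : ℂ)} := by
  have hfin : Set.Finite {r : ℝ | Module.End.HasEigenvalue (Matrix.toLin' M) (r : ℂ)} := by
    have h1 : Set.Finite (spectrum ℂ (Matrix.toLin' M)) := Module.End.finite_spectrum _
    apply Set.Finite.of_finite_image (f := (fun r : ℝ => (r : ℂ)))
    · exact h1.subset (by rintro z ⟨r, hr, rfl⟩; exact hr.mem_spectrum)
    · exact fun a _ b _ h => by simpa using h
  exact hfin.bddAbove

lemma one_sub_psd {n : ℕ} {M : Matrix (Fin n) (Fin n) ℂ} (hM : M.IsHermitian)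
    (hlam : lambdaMax M ≤ 1) : (1 - M).PosSemidef := by
  have heig : ∀ i, hM.eigenvalues i ≤ 1 := fun i =>
    le_trans (le_csSup (eig_bddAbove M) (eig_hasEig hM i)) hlam
  have hU : (hM.eigenvectorUnitary : Matrix (Fin n) (Fin n) ℂ) *
      star (hM.eigenvectorUnitary : Matrix (Fin n) (Fin n) ℂ) = 1 :=
    Matrix.mem_unitaryGroup_iff.mp hM.eigenvectorUnitary.2
  have hspec := hM.spectral_theorem
  rw [Unitary.conjStarAlgAut_apply] at hspec
  have key : 1 - M = (hM.eigenvectorUnitary : Matrix (Fin n) (Fin n) ℂ) *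
      (1 - Matrix.diagonal (RCLike.ofReal ∘ hM.eigenvalues)) *
      (hM.eigenvectorUnitary : Matrix (Fin n) (Fin n) ℂ)ᴴ := by
    rw [Matrix.star_eq_conjTranspose] at hU
    rw [Matrix.mul_sub, Matrix.sub_mul, Matrix.mul_one, hU,
      ← Matrix.star_eq_conjTranspose, ← hspec]
  rw [key]
  apply Matrix.PosSemidef.mul_mul_conjTranspose_same
  have : (1 : Matrix (Fin n) (Fin n) ℂ) - Matrix.diagonal (RCLike.ofReal ∘ hM.eigenvalues)
      = Matrix.diagonal (fun i => 1 - (hM.eigenvalues i : ℂ)) := by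
    rw [← Matrix.diagonal_one, Matrix.diagonal_sub]
    rfl
  rw [this]
  refine Matrix.posSemidef_diagonal_iff.mpr fun i => ?_
  rw [← Complex.ofReal_one, ← Complex.ofReal_sub]
  exact_mod_cast sub_nonneg.mpr (heig i)

lemma star_qMean {d : ℕ} {ρ A : Matrix (Fin d) (Fin d) ℂ} (hρ : ρ.IsHermitian)
    (hA : A.IsHermitian) : star (qMean ρ A) = qMean ρ A := by
  have h0 : star (qMean ρ A) = ((ρ * A)ᴴ).trace := by
    rw [Matrix.trace_conjTranspose]; rfl
  rw [h0, Matrix.conjTranspose_mul, hρ.eq, hA.eq, Matrix.trace_mul_comm]; rfl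

lemma cent_herm {d : ℕ} {ρ A : Matrix (Fin d) (Fin d) ℂ} (hρ : ρ.IsHermitian)
    (hA : A.IsHermitian) : (A - qMean ρ A • 1).IsHermitian := by
  unfold Matrix.IsHermitian
  rw [Matrix.conjTranspose_sub, hA.eq, Matrix.conjTranspose_smul,
    Matrix.conjTranspose_one]
  rw [star_qMean hρ hA]

lemma trace_key {d : ℕ} {ρ B C : Matrix (Fin d) (Fin d) ℂ} (hρ : ρ.PosSemidef)
    (hB : B.IsHermitian) :
    (((B * hρ.sqrt)ᴴ) * (C * hρ.sqrt)).trace = (ρ * (B * C)).trace := by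
  have hs : hρ.sqrt.IsHermitian := hρ.posSemidef_sqrt.isHermitian
  rw [Matrix.conjTranspose_mul, hs.eq, hB.eq]
  rw [show hρ.sqrt * B * (C * hρ.sqrt) = (hρ.sqrt * (B * C)) * hρ.sqrt by
    simp only [Matrix.mul_assoc]]
  rw [Matrix.trace_mul_comm, ← Matrix.mul_assoc, hρ.sqrt_mul_self]

lemma var_cent {d : ℕ} {ρ A : Matrix (Fin d) (Fin d) ℂ} (hρ1 : ρ.trace = 1) (μ : ℂ)
    (hμ : μ = (ρ * A).trace) :
    (ρ * ((A - μ • 1) * (A - μ • 1))).trace = (ρ * (A * A)).trace - (ρ * A).trace ^ 2 := by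
  have h1 : (A - μ • 1) * (A - μ • 1) = A * A - μ • A - μ • A + (μ * μ) • 1 := by
    simp only [Matrix.sub_mul, Matrix.mul_sub, Matrix.smul_mul, Matrix.mul_smul,
      Matrix.mul_one, Matrix.one_mul, smul_sub, smul_smul]
    abel
  rw [h1]
  simp only [Matrix.mul_add, Matrix.mul_sub, Matrix.trace_add, Matrix.trace_sub,
    Matrix.mul_smul, Matrix.trace_smul, Matrix.mul_one, hρ1, smul_eq_mul, mul_one, ← hμ]
  ring

lemma trace_sq_nonneg {d : ℕ} (X : Matrix (Fin d) (Fin d) ℂ) : 0 ≤ (Xᴴ * X).trace.re := by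
  rw [Matrix.trace]
  simp only [Matrix.diag, Matrix.mul_apply, Matrix.conjTranspose_apply]
  rw [Complex.re_sum]
  apply Finset.sum_nonneg; intro i _
  rw [Complex.re_sum]
  apply Finset.sum_nonneg; intro j _
  rw [show star (X j i) * X j i = ((Complex.normSq (X j i) : ℝ) : ℂ) by
    rw [Complex.normSq_eq_conj_mul_self]; rfl]
  simpa using Complex.normSq_nonneg _

theorem stmt19 {d : ℕ} (ρ : Matrix (Fin d) (Fin d) ℂ) (hρ : ρ.PosSemidef)
    (hρ1 : ρ.trace = 1) (A : Fin 3 → Matrix (Fin d) (Fin d) ℂ)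
    (hA : ∀ i, (A i).IsHermitian) (hΔ : ∀ i, qDev ρ (A i) ≠ 0)
    (P : Fin 3 → Matrix (Fin d) (Fin d) ℂ)
    (hP : ∀ i, P i = ((qDev ρ (A i) : ℂ))⁻¹ • ((A i - qMean ρ (A i) • 1) * hρ.sqrt))
    (M : Matrix (Fin 3) (Fin 3) ℂ) (hM : ∀ i j, M i j = ((P i)ᴴ * P j).trace)
    (hlam : lambdaMax M ≤ 1) :
    ∑ i, qVar ρ (A i) ≥ qVar ρ (A 0 + A 1 + A 2) := by
  have hρH : ρ.IsHermitian := hρ.isHermitian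
  set x : Fin 3 → ℝ := fun i => qDev ρ (A i) with hxdef
  set B : Fin 3 → Matrix (Fin d) (Fin d) ℂ := fun i => A i - qMean ρ (A i) • 1 with hBdef
  set Q : Fin 3 → Matrix (Fin d) (Fin d) ℂ := fun i => B i * hρ.sqrt with hQdef
  have hBH : ∀ i, (B i).IsHermitian := fun i => cent_herm hρH (hA i)
  have hT : ∀ i j, ((Q i)ᴴ * (Q j)).trace = (ρ * (B i * B j)).trace :=
    fun i j => trace_key hρ (hBH i)
  -- each variance
  have hvar : ∀ i, qVar ρ (A i) = ((Q i)ᴴ * (Q i)).trace.re := by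
    intro i
    rw [hT, qVar, var_cent hρ1 (qMean ρ (A i)) rfl]
  have hvnn : ∀ i, 0 ≤ qVar ρ (A i) := fun i => (hvar i) ▸ trace_sq_nonneg _
  have hx2 : ∀ i, x i ^ 2 = qVar ρ (A i) := fun i => Real.sq_sqrt (hvnn i)
  have hxne : ∀ i, (x i : ℂ) ≠ 0 := fun i => by exact_mod_cast hΔ i
  -- P in terms of Q
  have hPQ : ∀ i, P i = ((x i : ℂ))⁻¹ • Q i := fun i => hP i
  -- trace of QᴴQ in terms of M
  have hQM : ∀ i j, ((Q i)ᴴ * (Q j)).trace = (x i : ℂ) * (x j : ℂ) * M i j := by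
    intro i j
    rw [hM i j, hPQ i, hPQ j, Matrix.conjTranspose_smul, Matrix.smul_mul, Matrix.mul_smul,
      Matrix.trace_smul, Matrix.trace_smul]
    have hst : star ((x i : ℂ))⁻¹ = ((x i : ℂ))⁻¹ := by
      rw [star_inv₀, Complex.star_def, Complex.conj_ofReal]
    rw [hst, smul_eq_mul, smul_eq_mul,
      show (↑(x i):ℂ) * ↑(x j) * ((↑(x i):ℂ)⁻¹ * ((↑(x j):ℂ)⁻¹ * ((Q i)ᴴ * Q j).trace))
        = ((↑(x i):ℂ) * (↑(x i):ℂ)⁻¹) * (((↑(x j):ℂ) * (↑(x j):ℂ)⁻¹) * ((Q i)ᴴ * Q j).trace)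
        from by ring,
      mul_inv_cancel₀ (hxne i), mul_inv_cancel₀ (hxne j), one_mul, one_mul]
  -- M is Hermitian
  have hMH : M.IsHermitian := by
    ext i j
    rw [Matrix.conjTranspose_apply, hM j i, hM i j]
    have : star (((P j)ᴴ * P i).trace) = (((P j)ᴴ * P i)ᴴ).trace := by
      rw [Matrix.trace_conjTranspose]
    rw [this, Matrix.conjTranspose_mul, Matrix.conjTranspose_conjTranspose]
  -- variance of the sum
  have hsumA : A 0 + A 1 + A 2 = ∑ i, A i := by rw [Fin.sum_univ_three]
  have hmean_sum : qMean ρ (∑ i, A i) = ∑ i, qMean ρ (A i) := by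
    unfold qMean
    rw [Matrix.mul_sum, Matrix.trace_sum]
  have hBS : (∑ i, A i) - qMean ρ (∑ i, A i) • 1 = ∑ i, B i := by
    rw [hmean_sum, hBdef]
    simp only [Finset.sum_sub_distrib, Finset.sum_smul]
  have hvarsum : qVar ρ (∑ i, A i) = ((∑ i, Q i)ᴴ * (∑ i, Q i)).trace.re := by
    have hBSH : ((∑ i, A i) - qMean ρ (∑ i, A i) • 1).IsHermitian :=
      cent_herm hρH (by rw [← hsumA]; exact ((hA 0).add (hA 1)).add (hA 2))
    have h1 : ((∑ i, Q i)ᴴ * (∑ i, Q i)).trace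
        = (ρ * ((∑ i, B i) * (∑ i, B i))).trace := by
      have : (∑ i, Q i) = (∑ i, B i) * hρ.sqrt := by
        rw [Finset.sum_mul]
      rw [this]
      exact trace_key hρ (hBS ▸ hBSH)
    rw [h1, qVar, ← hBS, var_cent hρ1 (qMean ρ (∑ i, A i)) rfl]
  -- expand sum trace
  have hexp : ((∑ i, Q i)ᴴ * (∑ i, Q i)).trace = ∑ i, ∑ j, ((Q i)ᴴ * Q j).trace := by
    rw [Matrix.conjTranspose_sum, Finset.sum_mul]
    simp only [Finset.mul_sum, Matrix.trace_sum]
  -- PSD inequality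
  set v : Fin 3 → ℂ := fun i => (x i : ℂ) with hvdef
  have hstv : star v = v := by
    funext i
    simp [hvdef, Complex.star_def, Complex.conj_ofReal]
  have hpsd := (one_sub_psd hMH hlam).dotProduct_mulVec_nonneg v
  rw [Matrix.sub_mulVec, dotProduct_sub, Matrix.one_mulVec] at hpsd
  have hre := (Complex.nonneg_iff.mp hpsd).1
  rw [Complex.sub_re] at hre
  have hvv : (star v ⬝ᵥ v).re = ∑ i, x i ^ 2 := by
    rw [hstv, dotProduct, Complex.re_sum]
    apply Finset.sum_congr rfl
    intro i _
    rw [hvdef]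
    push_cast
    rw [← Complex.ofReal_mul]
    simp [sq]
  have hvMv : (star v ⬝ᵥ M *ᵥ v).re = ∑ i, ∑ j, ((x i : ℂ) * (x j : ℂ) * M i j).re := by
    rw [hstv, dotProduct, Complex.re_sum]
    apply Finset.sum_congr rfl
    intro i _
    rw [Matrix.mulVec, dotProduct, Finset.mul_sum, Complex.re_sum]
    apply Finset.sum_congr rfl
    intro j _
    congr 1
    simp only [hvdef]
    ring
  -- put it together
  rw [hsumA, hvarsum, hexp, Complex.re_sum]
  have : ∑ i, ∑ j, (((Q i)ᴴ * Q j).trace).re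
      = ∑ i, ∑ j, ((x i : ℂ) * (x j : ℂ) * M i j).re := by
    apply Finset.sum_congr rfl; intro i _
    apply Finset.sum_congr rfl; intro j _
    rw [hQM]
  calc ∑ i, (∑ j, ((Q i)ᴴ * Q j).trace).re
      = ∑ i, ∑ j, ((x i : ℂ) * (x j : ℂ) * M i j).re := by
        simp only [Complex.re_sum]; exact this
    _ = (star v ⬝ᵥ M *ᵥ v).re := hvMv.symm
    _ ≤ (star v ⬝ᵥ v).re := by linarith
    _ = ∑ i, x i ^ 2 := hvv
    _ = ∑ i, qVar ρ (A i) := by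
        apply Finset.sum_congr rfl; intro i _; exact hx2 i
end
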